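/- Any substitutive instruction is incompatible with the instruction eq: if the calculus contains an instruction eq with the rule eq ⋆ t₁·t₂·u·v·π ≻₁ u ⋆ π when t₁ ≡ t₂ and ≻₁ v ⋆ π when t₁ ≢ t₂, then no instruction κ ∈ C is substitutive. -/

import Mathlib

mutual
  /-- Terms of the λc-calculus (de Bruijn indices for λ-variables), with
  instructions `κ ∈ C`: `instr 0` is `cc` and `instr 1` is `eq`. -/
  inductive Term : Type
    | var : ℕ → Term
    | lam : Term → Term
    | app : Term → Term → Term
    | cont : Stack → Term
    | instr : ℕ → Term

  /-- Stacks: stack constants and push `t·π`. -/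
  inductive Stack : Type
    | sconst : ℕ → Stack
    | cons : Term → Stack → Stack
end

def cc : Term := .instr 0

/-- The instruction `eq`, testing syntactic equality of its first two
arguments. -/
def eqInstr : Term := .instr 1

/-- Substitution `t{x := u}` of a λ-variable (de Bruijn index `n`) by a
closed term `u`. -/
def Term.subst : Term → ℕ → Term → Term
  | .var m, n, u => if m = n then u else if n < m then .var (m - 1) else .var m
  | .lam t, n, u => .lam (t.subst (n + 1) u)
  | .app t₁ t₂, n, u => .app (t₁.subst n u) (t₂.subst n u)
  | .cont π, _, _ => .cont π
  | .instr k, _, _ => .instr k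

/-- One-step evaluation: the four KAM rules together with the two rules
(Eq) for the instruction `eq`. -/
inductive Step : Term × Stack → Term × Stack → Prop
  | push (t u : Term) (π : Stack) : Step (.app t u, π) (t, .cons u π)
  | grab (t u : Term) (π : Stack) : Step (.lam t, .cons u π) (t.subst 0 u, π)
  | save (t : Term) (π : Stack) : Step (cc, .cons t π) (t, .cons (.cont π) π)
  | restore (t : Term) (π π' : Stack) : Step (.cont π, .cons t π') (t, π)
  | eq_true (t₁ t₂ u v : Term) (π : Stack) : t₁ = t₂ →
      Step (eqInstr, .cons t₁ (.cons t₂ (.cons u (.cons v π)))) (u, π)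
  | eq_false (t₁ t₂ u v : Term) (π : Stack) : t₁ ≠ t₂ →
      Step (eqInstr, .cons t₁ (.cons t₂ (.cons u (.cons v π)))) (v, π)

mutual
  /-- Simultaneous substitution of instruction constants (via `σ`) and stack
  constants (via `τ`) in a term; it propagates through continuation
  constants. -/
  def msubT (σ : ℕ → Term) (τ : ℕ → Stack) : Term → Term
    | .var n => .var n
    | .lam t => .lam (msubT σ τ t)
    | .app t u => .app (msubT σ τ t) (msubT σ τ u)
    | .cont π => .cont (msubS σ τ π)
    | .instr k => σ k

  /-- Simultaneous substitution in a stack. -/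
  def msubS (σ : ℕ → Term) (τ : ℕ → Stack) : Stack → Stack
    | .sconst a => τ a
    | .cons t π => .cons (msubT σ τ t) (msubS σ τ π)
end

/-- Substitution `p{κ := u}` of the single instruction constant `κ = instr k`
by `u` in a process. -/
def substConst (k : ℕ) (u : Term) (p : Term × Stack) : Term × Stack :=
  (msubT (Function.update Term.instr k u) Stack.sconst p.1,
   msubS (Function.update Term.instr k u) Stack.sconst p.2)

/-- An instruction constant `κ = instr k` is substitutive if one-step
evaluation is stable under substituting `κ` by any closed term. -/
def Substitutive (k : ℕ) : Prop :=
  ∀ (u : Term) (p p' : Term × Stack), Step p p' → Step (substConst k u p) (substConst k u p')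

/-! Run `eq ⋆ κ·x₀·x₁·x₂·α₀ ≻ x₂ ⋆ α₀` through the substitution `κ := x₀`. If `κ` is `eq` itself,
the head becomes the variable `x₀`, which cannot step; otherwise the two tested terms become equal,
so by determinism the result would have to be `x₁ ⋆ α₀`. -/

namespace Step

theorem deterministic {p q r : Term × Stack} (hq : Step p q) (hr : Step p r) : q = r := by
  cases hq <;> cases hr <;> first | rfl | contradiction

theorem not_var (n : ℕ) (π : Stack) (q : Term × Stack) : ¬ Step (.var n, π) q := by
  rintro ⟨⟩

end Step

/-- In the presence of the instruction `eq`, no instruction constant is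
substitutive. -/
theorem no_substitutive_with_eq : ∀ k : ℕ, ¬ Substitutive k := by
  intro k hk
  have hstep : Step (eqInstr, .cons (.instr k) (.cons (.var 0) (.cons (.var 1)
      (.cons (.var 2) (.sconst 0))))) (.var 2, .sconst 0) :=
    Step.eq_false _ _ _ _ _ Term.noConfusion
  have hsubst := hk (.var 0) _ _ hstep
  simp only [substConst, eqInstr, msubT, msubS, Function.update_self] at hsubst
  by_cases hk1 : k = 1
  · subst hk1
    rw [Function.update_self] at hsubst
    exact Step.not_var 0 _ _ hsubst
  · rw [Function.update_of_ne (Ne.symm hk1)] at hsubst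
    nomatch hsubst.deterministic (Step.eq_true _ _ (.var 1) (.var 2) _ rfl)
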